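/- Let φ : M(n,ℝ) → ℝ be φ(A) = tr(√(AᵀA)). If A is invertible, then φ is differentiable at A and its derivative is the linear map H ↦ ⟨A(√(AᵀA))⁻¹, H⟩ = tr((A(√(AᵀA))⁻¹)ᵀ H). -/

import Mathlib

open Matrix

attribute [local instance] Matrix.normedAddCommGroup Matrix.normedSpace

open scoped Classical in
/-- The unique positive semidefinite square root of a positive semidefinite real matrix
(junk value `0` on matrices that are not positive semidefinite). -/
noncomputable def psdSqrt {n : ℕ} (X : Matrix (Fin n) (Fin n) ℝ) : Matrix (Fin n) (Fin n) ℝ :=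
  if h : X.PosSemidef then
    (h.1.eigenvectorUnitary : Matrix (Fin n) (Fin n) ℝ) *
      diagonal ((↑) ∘ (fun x : ℝ => √x) ∘ h.1.eigenvalues) *
      (star h.1.eigenvectorUnitary : Matrix (Fin n) (Fin n) ℝ)
  else 0

/-!
The Gram map `X ↦ Xᵀ X` sends `A` to the positive definite matrix `S = Aᵀ A`, whose square root
`P = √S` is positive definite. The derivative `H ↦ P H + H P` of squaring at `P` is injective, so
by the inverse function theorem squaring has a strictly differentiable local inverse near `S`.
Since squaring is injective near `P` and the square root is continuous, the square root agrees
with that local inverse on positive semidefinite matrices near `S`; its derivative at `S` is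
therefore the inverse Sylvester operator `M ↦ K`, `P K + K P = M`. Finally
`tr K = tr (P⁻¹ M) / 2`, which for `M = Aᵀ H + Hᵀ A` equals `tr ((A P⁻¹)ᵀ H)`.
-/

open scoped MatrixOrder ComplexOrder Topology

section Trace

variable {l m R : Type*} [Fintype l] [Fintype m] [DecidableEq m] [CommRing R]

theorem Matrix.trace_inv_mul_mul_add_mul {P : Matrix m m R} (hP : IsUnit P) (K : Matrix m m R) :
    trace (P⁻¹ * (P * K + K * P)) = 2 * trace K := by
  have hdet := (isUnit_iff_isUnit_det P).mp hP
  rw [Matrix.mul_add, trace_add, ← Matrix.mul_assoc, nonsing_inv_mul P hdet, Matrix.one_mul,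
    trace_mul_comm, Matrix.mul_assoc, mul_nonsing_inv P hdet, Matrix.mul_one, two_mul]

theorem Matrix.trace_inv_mul_transpose_mul_add {P : Matrix m m R} (hP : P.IsSymm)
    (A H : Matrix l m R) : trace (P⁻¹ * (Aᵀ * H + Hᵀ * A)) = 2 * trace ((A * P⁻¹)ᵀ * H) := by
  have hswap : trace (P⁻¹ * (Hᵀ * A)) = trace (P⁻¹ * (Aᵀ * H)) := by
    rw [← trace_transpose, transpose_mul, transpose_mul, transpose_transpose,
      transpose_nonsing_inv, hP.eq, trace_mul_comm]
  rw [Matrix.mul_add, trace_add, hswap, transpose_mul, transpose_nonsing_inv, hP.eq,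
    Matrix.mul_assoc, two_mul]

end Trace

section Sylvester

variable {𝕜 m : Type*} [RCLike 𝕜] [Fintype m]

theorem Matrix.PosDef.eq_zero_of_mul_add_mul_eq_zero {P H : Matrix m m 𝕜} (hP : P.PosDef)
    (h : P * H + H * P = 0) : H = 0 := by
  have hcongr : (Hᴴ * P * H).trace = -(H * P * Hᴴ).trace := by
    rw [Matrix.mul_assoc, trace_mul_comm, eq_neg_of_add_eq_zero_left h, neg_mul, trace_neg]
  have hleft := hP.posSemidef.conjTranspose_mul_mul_same H
  have hright := hP.posSemidef.mul_mul_conjTranspose_same H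
  have hzero : Hᴴ * P * H = 0 := hleft.trace_eq_zero_iff.mp <|
    le_antisymm (hcongr ▸ neg_nonpos.mpr hright.trace_nonneg) hleft.trace_nonneg
  refine mulVec_injective (funext fun x => ?_)
  rw [zero_mulVec]
  by_contra hx
  have := hP.dotProduct_mulVec_pos hx
  rw [star_mulVec, dotProduct_mulVec, vecMul_vecMul, ← dotProduct_mulVec, mulVec_mulVec, hzero,
    zero_mulVec, dotProduct_zero] at this
  exact this.false

variable [DecidableEq m]

noncomputable def Matrix.PosDef.sylvesterEquiv {P : Matrix m m 𝕜} (hP : P.PosDef) :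
    Matrix m m 𝕜 ≃L[𝕜] Matrix m m 𝕜 :=
  (LinearEquiv.ofInjectiveEndo (LinearMap.mulLeft 𝕜 P + LinearMap.mulRight 𝕜 P) <|
    (injective_iff_map_eq_zero _).mpr fun _ => hP.eq_zero_of_mul_add_mul_eq_zero
  ).toContinuousLinearEquiv

@[simp]
theorem Matrix.PosDef.sylvesterEquiv_apply {P : Matrix m m 𝕜} (hP : P.PosDef)
    (H : Matrix m m 𝕜) : hP.sylvesterEquiv H = P * H + H * P :=
  rfl

theorem Matrix.PosDef.two_mul_trace_sylvesterEquiv_symm {P : Matrix m m 𝕜} (hP : P.PosDef)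
    (M : Matrix m m 𝕜) : 2 * trace (hP.sylvesterEquiv.symm M) = trace (P⁻¹ * M) := by
  conv_rhs => rw [← hP.sylvesterEquiv.apply_symm_apply M, sylvesterEquiv_apply]
  exact (trace_inv_mul_mul_add_mul hP.isUnit _).symm

end Sylvester

section Calculus

variable {𝕜 : Type*} [NontriviallyNormedField 𝕜] [CompleteSpace 𝕜] {l m n : Type*} [Fintype l]
  [Fintype m] [Fintype n] {E : Type*} [NormedAddCommGroup E] [NormedSpace 𝕜 E]

theorem Matrix.isBoundedBilinearMap_mul :
    IsBoundedBilinearMap 𝕜 fun p : Matrix l m 𝕜 × Matrix m n 𝕜 => p.1 * p.2 := by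
  exact (LinearMap.toContinuousLinearMap
    (LinearMap.toContinuousLinearMap.toLinearMap ∘ₗ mulLinearMap 𝕜 :
      Matrix l m 𝕜 →ₗ[𝕜] Matrix m n 𝕜 →L[𝕜] Matrix l n 𝕜)).isBoundedBilinearMap

theorem HasStrictFDerivAt.matrix_mul {f : E → Matrix l m 𝕜} {g : E → Matrix m n 𝕜}
    {f' : E →L[𝕜] Matrix l m 𝕜} {g' : E →L[𝕜] Matrix m n 𝕜} {x : E}
    (hf : HasStrictFDerivAt f f' x) (hg : HasStrictFDerivAt g g' x) :
    HasStrictFDerivAt (fun y => f y * g y)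
      (isBoundedBilinearMap_mul.deriv (f x, g x) ∘L f'.prod g') x :=
  (isBoundedBilinearMap_mul.hasStrictFDerivAt (f x, g x)).comp x (hf.prodMk hg)

theorem HasStrictFDerivAt.matrix_transpose {f : E → Matrix m n 𝕜} {f' : E →L[𝕜] Matrix m n 𝕜}
    {x : E} (hf : HasStrictFDerivAt f f' x) :
    HasStrictFDerivAt (fun y => (f y)ᵀ)
      (((transposeLinearEquiv m n 𝕜 𝕜).toContinuousLinearEquiv : _ →L[𝕜] _) ∘L f') x :=
  (transposeLinearEquiv m n 𝕜 𝕜).toContinuousLinearEquiv.hasStrictFDerivAt.comp x hf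

end Calculus

section Sqrt

variable {m : Type*} [Fintype m] [DecidableEq m]

theorem Matrix.PosDef.sqrt {S : Matrix m m ℝ} (hS : S.PosDef) : (CFC.sqrt S).PosDef :=
  hS.isStrictlyPositive.sqrt.posDef

theorem Matrix.PosDef.hasStrictFDerivAt_mul_self {P : Matrix m m ℝ} (hP : P.PosDef) :
    HasStrictFDerivAt (fun X : Matrix m m ℝ => X * X) (hP.sylvesterEquiv : _ →L[ℝ] _) P :=
  ((hasStrictFDerivAt_id P).matrix_mul (hasStrictFDerivAt_id P)).congr_fderiv <| by
    ext1 H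
    show isBoundedBilinearMap_mul.deriv (P, P) (H, H) = P * H + H * P
    rw [IsBoundedBilinearMap.deriv_apply]

-- Continuity only depends on the topology, which the operator norm (where the square root is
-- isometric) shares with the entrywise norm in force here.
theorem Matrix.continuousOn_sqrt : ContinuousOn (CFC.sqrt : Matrix m m ℝ → _) {Y | 0 ≤ Y} := by
  open scoped Matrix.Norms.L2Operator in exact CFC.continuousOn_sqrt (A := Matrix m m ℝ)

theorem Matrix.PosDef.hasFDerivWithinAt_sqrt {S : Matrix m m ℝ} (hS : S.PosDef) :
    HasFDerivWithinAt CFC.sqrt (hS.sqrt.sylvesterEquiv.symm : _ →L[ℝ] _) {Y | 0 ≤ Y} S := by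
  have hsq := hS.sqrt.hasStrictFDerivAt_mul_self
  have hS₀ : 0 ≤ S := hS.posSemidef.nonneg
  have hinv := hsq.to_localInverse
  rw [CFC.sqrt_mul_sqrt_self S] at hinv
  have hsqrt : CFC.sqrt =ᶠ[𝓝[{Y | 0 ≤ Y}] S] hsq.localInverse := by
    filter_upwards [(continuousOn_sqrt S hS₀).tendsto.eventually hsq.eventually_left_inverse,
      self_mem_nhdsWithin] with Y hY hY₀
    rw [← hY, CFC.sqrt_mul_sqrt_self Y hY₀]
  exact hinv.hasFDerivAt.hasFDerivWithinAt.congr_of_eventuallyEq hsqrt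
    (hsqrt.self_of_nhdsWithin hS₀)

end Sqrt

theorem psdSqrt_eq_sqrt {n : ℕ} {X : Matrix (Fin n) (Fin n) ℝ} (hX : X.PosSemidef) :
    psdSqrt X = CFC.sqrt X := by
  rw [CFC.sqrt_eq_real_sqrt X hX.nonneg, cfcₙ_eq_cfc, hX.1.cfc_eq, IsHermitian.cfc,
    Unitary.conjStarAlgAut_apply, psdSqrt, dif_pos hX]
  rfl

/-- Let φ(A) = tr(√(AᵀA)).  If A is invertible, then φ is differentiable at A and
its derivative is the linear map H ↦ ⟨A(√(AᵀA))⁻¹, H⟩ = tr((A(√(AᵀA))⁻¹)ᵀ H). -/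
theorem deriv_trace_sqrt_at_invertible {n : ℕ} (A : Matrix (Fin n) (Fin n) ℝ)
    (hA : IsUnit A.det) :
    ∃ L : Matrix (Fin n) (Fin n) ℝ →L[ℝ] ℝ,
      HasFDerivAt (fun X : Matrix (Fin n) (Fin n) ℝ => Matrix.trace (psdSqrt (Xᵀ * X))) L A ∧
      ∀ H : Matrix (Fin n) (Fin n) ℝ,
        L H = Matrix.trace ((A * (psdSqrt (Aᵀ * A))⁻¹)ᵀ * H) := by
  have hgram (X : Matrix (Fin n) (Fin n) ℝ) : (Xᵀ * X).PosSemidef := by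
    simpa using posSemidef_conjTranspose_mul_self X
  have hS : (Aᵀ * A).PosDef := by
    simpa using PosDef.conjTranspose_mul_self A
      (mulVec_injective_of_isUnit ((isUnit_iff_isUnit_det A).mpr hA))
  have hφ : (fun X : Matrix (Fin n) (Fin n) ℝ => trace (psdSqrt (Xᵀ * X))) =
      (traceLinearMap (Fin n) ℝ ℝ).toContinuousLinearMap ∘ CFC.sqrt ∘ fun X => Xᵀ * X :=
    funext fun X => by rw [psdSqrt_eq_sqrt (hgram X)]; rfl
  have hsqrt_gram := hS.hasFDerivWithinAt_sqrt.comp_hasFDerivAt (f := fun X => Xᵀ * X) A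
    ((hasStrictFDerivAt_id A).matrix_transpose.matrix_mul (hasStrictFDerivAt_id A)).hasFDerivAt
    (Filter.Eventually.of_forall fun X => (hgram X).nonneg)
  rw [hφ]
  refine ⟨_, (traceLinearMap (Fin n) ℝ ℝ).toContinuousLinearMap.hasFDerivAt.comp A hsqrt_gram,
    fun H => mul_left_cancel₀ two_ne_zero ?_⟩
  show 2 * trace (hS.sqrt.sylvesterEquiv.symm (isBoundedBilinearMap_mul.deriv (Aᵀ, A) (Hᵀ, H))) = _
  rw [IsBoundedBilinearMap.deriv_apply, hS.sqrt.two_mul_trace_sylvesterEquiv_symm,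
    trace_inv_mul_transpose_mul_add (isHermitian_iff_isSymm.mp hS.sqrt.isHermitian),
    psdSqrt_eq_sqrt hS.posSemidef]
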